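/- arXiv:2402.07002 — 5 statements merged into one kernel-verified Lean document; each statement's English description precedes it below -/
import Mathlib

section
/- Fix m, n ∈ ℕ and a real τ > 0. Let σ : Fin (min m n) → ℝ satisfy σ_j ≥ 0 for all j, let S ∈ ℝ^{m×n} be the rectangular diagonal matrix with diagonal entries σ_j, let U ∈ ℝ^{m×m} and V ∈ ℝ^{n×n} be orthogonal matrices, and set Y = U ⬝ S ⬝ Vᵀ. Let D ∈ ℝ^{m×n} be the rectangular diagonal matrix with diagonal entries max(σ_j − 1/(2τ), 0), and set Ŷ = U ⬝ D ⬝ Vᵀ. Then Ŷ minimizes X ↦ τ‖X − Y‖_F² + ‖X‖_* over all X ∈ ℝ^{m×n}: for every X ∈ ℝ^{m×n}, τ‖Ŷ − Y‖_F² + ‖Ŷ‖_* ≤ τ‖X − Y‖_F² + ‖X‖_*. (Matrix singular-value-thresholding lemma; this is the per-Fourier-slice content of Theorem 3.1, Eq. (7), and Lemma B.1.) -/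
/-!
`G := 2τ (Y - Ŷ) = U E Vᵀ`, where `E` is rectangular diagonal with entries `min (2τσⱼ) 1`,
is a subgradient of the nuclear norm at `Ŷ`. Its spectral norm is at most `1`, so
`tr (Gᵀ X) ≤ ‖X‖_*` for every `X` (Cauchy–Schwarz column by column, in an eigenbasis of `XᵀX`),
while `tr (Gᵀ Ŷ) = ‖Ŷ‖_*` because `Eⱼ = 1` wherever the thresholded value is nonzero. Expanding
`‖X - Y‖_F² = ‖X - Ŷ‖_F² + 2 tr ((X - Ŷ)ᵀ (Ŷ - Y)) + ‖Ŷ - Y‖_F²` then gives the inequality.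
-/

open Matrix

noncomputable def rectDiag (m n : ℕ) (σ : Fin (min m n) → ℝ) : Matrix (Fin m) (Fin n) ℝ :=
  Matrix.of fun i j =>
    if h : (i : ℕ) = (j : ℕ) ∧ (i : ℕ) < min m n then σ ⟨(i : ℕ), h.2⟩ else 0

section
open scoped ComplexOrder
noncomputable def Matrix.PosSemidef.sqrt {n 𝕜 : Type*} [Fintype n] [RCLike 𝕜] [DecidableEq n]
    {A : Matrix n n 𝕜} (hA : A.PosSemidef) : Matrix n n 𝕜 :=
  hA.1.eigenvectorUnitary.1 * diagonal ((↑) ∘ (√·) ∘ hA.1.eigenvalues) *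
    (star hA.1.eigenvectorUnitary : Matrix n n 𝕜)
end

noncomputable def frobNorm {m n : ℕ} (X : Matrix (Fin m) (Fin n) ℝ) : ℝ :=
  Real.sqrt (∑ i, ∑ j, (X i j) ^ 2)

noncomputable def nuclearNorm {m n : ℕ} (X : Matrix (Fin m) (Fin n) ℝ) : ℝ :=
  (Matrix.posSemidef_conjTranspose_mul_self X).sqrt.trace

namespace Matrix.PosSemidef

variable {k 𝕜 : Type*} [Fintype k] [DecidableEq k] [RCLike 𝕜]
open scoped MatrixOrder ComplexOrder

lemma sqrt_eq_cfcSqrt {A : Matrix k k 𝕜} (hA : A.PosSemidef) : hA.sqrt = CFC.sqrt A := by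
  rw [CFC.sqrt_eq_real_sqrt A hA.nonneg, cfcₙ_eq_cfc, hA.1.cfc_eq, IsHermitian.cfc,
    Unitary.conjStarAlgAut_apply]
  rfl

lemma sqrt_eq_of_mul_self {A B : Matrix k k 𝕜} (hA : A.PosSemidef) (hB : B.PosSemidef)
    (hBA : B * B = A) : hA.sqrt = B := by
  rw [hA.sqrt_eq_cfcSqrt]
  exact CFC.sqrt_unique hBA hB.nonneg

lemma trace_sqrt {A : Matrix k k 𝕜} (hA : A.PosSemidef) :
    hA.sqrt.trace = ∑ i, (√(hA.1.eigenvalues i) : 𝕜) := by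
  simp [PosSemidef.sqrt, trace_mul_cycle]

end Matrix.PosSemidef

section transpose

variable {l m n R : Type*} [Fintype m]

lemma trace_transpose_mul_eq_sum [Fintype n] [NonUnitalNonAssocSemiring R] (A B : Matrix m n R) :
    (Aᵀ * B).trace = ∑ j, ∑ i, A i j * B i j := by
  simp [trace, mul_apply]

lemma transpose_mul_self_apply_self [Semiring R] (A : Matrix m n R) (j : n) :
    (Aᵀ * A) j j = ∑ i, A i j ^ 2 := by
  simp [mul_apply, sq]

lemma transpose_mul_of_orthogonal [Fintype l] [Fintype n] [DecidableEq m] [CommRing R]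
    {U : Matrix l m R} {V : Matrix n n R} (hU : Uᵀ * U = 1) (A B : Matrix m n R) :
    (U * A * Vᵀ)ᵀ * (U * B * Vᵀ) = V * (Aᵀ * B) * Vᵀ := by
  simp only [transpose_mul, transpose_transpose, Matrix.mul_assoc]
  rw [← Matrix.mul_assoc Uᵀ, hU, Matrix.one_mul]

end transpose

section norms

variable {m n : ℕ}

lemma frobNorm_sq (A : Matrix (Fin m) (Fin n) ℝ) : frobNorm A ^ 2 = (Aᵀ * A).trace := by
  rw [frobNorm, Real.sq_sqrt (by positivity), trace_transpose_mul_eq_sum, Finset.sum_comm]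
  simp [sq]

lemma frobNorm_add_sq (A B : Matrix (Fin m) (Fin n) ℝ) :
    frobNorm (A + B) ^ 2 = frobNorm A ^ 2 + 2 * (Aᵀ * B).trace + frobNorm B ^ 2 := by
  have hBA : (Bᵀ * A).trace = (Aᵀ * B).trace := by
    rw [← trace_transpose, transpose_mul, transpose_transpose]
  simp only [frobNorm_sq, transpose_add, Matrix.add_mul, Matrix.mul_add, trace_add, hBA]
  ring

lemma nuclearNorm_eq_trace_of_mul_self {X : Matrix (Fin m) (Fin n) ℝ}
    {P : Matrix (Fin n) (Fin n) ℝ} (hP : P.PosSemidef) (hPX : P * P = Xᵀ * X) :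
    nuclearNorm X = P.trace := by
  rw [← conjTranspose_eq_transpose_of_trivial] at hPX
  rw [nuclearNorm, PosSemidef.sqrt_eq_of_mul_self _ hP hPX]

lemma nuclearNorm_eq_sum_sqrt_eigenvalues (X : Matrix (Fin m) (Fin n) ℝ) :
    nuclearNorm X = ∑ j, √((posSemidef_conjTranspose_mul_self X).1.eigenvalues j) := by
  rw [nuclearNorm, PosSemidef.trace_sqrt]
  rfl

lemma trace_transpose_mul_le_nuclearNorm {G : Matrix (Fin m) (Fin n) ℝ}
    (hG : (1 - Gᵀ * G).PosSemidef) (X : Matrix (Fin m) (Fin n) ℝ) :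
    (Gᵀ * X).trace ≤ nuclearNorm X := by
  set hXX := (posSemidef_conjTranspose_mul_self X).1
  set W : Matrix (Fin n) (Fin n) ℝ := ↑hXX.eigenvectorUnitary
  have hWW : Wᵀ * W = 1 := Unitary.coe_star_mul_self hXX.eigenvectorUnitary
  have hWW' : W * Wᵀ = 1 := Unitary.coe_mul_star_self hXX.eigenvectorUnitary
  have hXW : (X * W)ᵀ * (X * W) = diagonal hXX.eigenvalues := by
    have := hXX.conjStarAlgAut_star_eigenvectorUnitary
    rw [Unitary.conjStarAlgAut_star_apply] at this
    calc (X * W)ᵀ * (X * W) = star W * (Xᴴ * X) * W := by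
          simp only [transpose_mul, star_eq_conjTranspose, conjTranspose_eq_transpose_of_trivial,
            Matrix.mul_assoc]
      _ = diagonal hXX.eigenvalues := this
  have hcolX : ∀ j, ∑ i, (X * W) i j ^ 2 = hXX.eigenvalues j := fun j => by
    rw [← transpose_mul_self_apply_self, hXW, diagonal_apply_eq]
  have hcolG : ∀ j, ∑ i, (G * W) i j ^ 2 ≤ 1 := fun j => by
    have hpsd : (1 - (G * W)ᵀ * (G * W)).PosSemidef := by
      have := hG.conjTranspose_mul_mul_same W
      rw [conjTranspose_eq_transpose_of_trivial, Matrix.mul_sub, Matrix.sub_mul, Matrix.mul_one,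
        hWW] at this
      simpa only [transpose_mul, Matrix.mul_assoc] using this
    have := hpsd.diag_nonneg (i := j)
    rw [Matrix.sub_apply, one_apply_eq, transpose_mul_self_apply_self] at this
    linarith
  have htrace : (Gᵀ * X).trace = ∑ j, ∑ i, (G * W) i j * (X * W) i j := by
    rw [← trace_transpose_mul_eq_sum, transpose_mul, Matrix.mul_assoc, trace_mul_comm Wᵀ]
    simp only [Matrix.mul_assoc, hWW', Matrix.mul_one]
  rw [htrace, nuclearNorm_eq_sum_sqrt_eigenvalues]
  refine Finset.sum_le_sum fun j _ => ?_
  calc ∑ i, (G * W) i j * (X * W) i j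
      ≤ √(∑ i, (G * W) i j ^ 2) * √(∑ i, (X * W) i j ^ 2) :=
        Real.sum_mul_le_sqrt_mul_sqrt _ _ _
    _ ≤ 1 * √(hXX.eigenvalues j) := by
      rw [hcolX]
      gcongr
      exact Real.sqrt_le_one.mpr (hcolG j)
    _ = _ := one_mul _

lemma add_nuclearNorm_le_of_subgradient {τ : ℝ} (hτ : 0 ≤ τ)
    {Y Yhat G : Matrix (Fin m) (Fin n) ℝ} (hGY : G = (2 * τ) • (Y - Yhat))
    (hG : (1 - Gᵀ * G).PosSemidef) (hGYhat : (Gᵀ * Yhat).trace = nuclearNorm Yhat)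
    (X : Matrix (Fin m) (Fin n) ℝ) :
    τ * frobNorm (Yhat - Y) ^ 2 + nuclearNorm Yhat ≤
      τ * frobNorm (X - Y) ^ 2 + nuclearNorm X := by
  have hcross :
      2 * τ * ((X - Yhat)ᵀ * (Yhat - Y)).trace = (Gᵀ * Yhat).trace - (Gᵀ * X).trace := by
    rw [hGY, ← trace_transpose ((X - Yhat)ᵀ * _)]
    simp only [transpose_mul, transpose_transpose, transpose_smul, transpose_sub, Matrix.smul_mul,
      Matrix.sub_mul, Matrix.mul_sub, trace_sub, trace_smul, smul_eq_mul]
    ring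
  have hsplit : X - Y = (X - Yhat) + (Yhat - Y) := by abel
  rw [hsplit, frobNorm_add_sq]
  nlinarith [trace_transpose_mul_le_nuclearNorm hG X, sq_nonneg (frobNorm (X - Yhat))]

end norms

section rectDiag

variable (m n : ℕ)

def padDiag (a : Fin (min m n) → ℝ) : Fin n → ℝ :=
  fun j => if h : (j : ℕ) < min m n then a ⟨j, h⟩ else 0

lemma sum_padDiag (a : Fin (min m n) → ℝ) : ∑ j, padDiag m n a j = ∑ k, a k :=
  (Fintype.sum_of_injective (Fin.castLE (min_le_right m n)) (Fin.castLE_injective _) a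
    (padDiag m n a) (fun _ hj => dif_neg fun h => hj ⟨⟨_, h⟩, rfl⟩)
    fun k => by simp only [padDiag, Fin.val_castLE, dif_pos k.isLt]).symm

lemma padDiag_mul (a b : Fin (min m n) → ℝ) :
    padDiag m n (a * b) = padDiag m n a * padDiag m n b := by
  ext j
  simp only [padDiag, Pi.mul_apply]
  split_ifs <;> simp

lemma rectDiag_apply (a : Fin (min m n) → ℝ) (i : Fin m) (j : Fin n) :
    rectDiag m n a i j = if (i : ℕ) = j then padDiag m n a j else 0 := by
  simp only [rectDiag, padDiag, of_apply]
  split_ifs with h <;> first | rfl | (exfalso; omega) | exact congrArg a (Fin.ext h.1)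

lemma rectDiag_transpose_mul_rectDiag (a b : Fin (min m n) → ℝ) :
    (rectDiag m n a)ᵀ * rectDiag m n b = diagonal (padDiag m n (a * b)) := by
  ext j l
  simp only [mul_apply, transpose_apply, rectDiag_apply, diagonal_apply, padDiag_mul]
  by_cases hj : (j : ℕ) < min m n
  · rw [Finset.sum_eq_single ⟨j, hj.trans_le (min_le_left _ _)⟩]
    · by_cases hjl : j = l
      · simp [hjl]
      · simp [hjl, Fin.val_inj]
    · intro i _ hi
      rw [if_neg fun h => hi (Fin.ext h), zero_mul]
    · simp
  · have hpad : padDiag m n a j = 0 := dif_neg hj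
    simp [hpad]

lemma rectDiag_sub (a b : Fin (min m n) → ℝ) :
    rectDiag m n (a - b) = rectDiag m n a - rectDiag m n b := by
  ext i j
  simp only [rectDiag, of_apply, Matrix.sub_apply, Pi.sub_apply]
  split_ifs <;> simp

lemma rectDiag_smul (c : ℝ) (a : Fin (min m n) → ℝ) :
    rectDiag m n (c • a) = c • rectDiag m n a := by
  ext i j
  simp only [rectDiag, of_apply, Matrix.smul_apply, Pi.smul_apply]
  split_ifs <;> simp

variable {m n} {U : Matrix (Fin m) (Fin m) ℝ} {V : Matrix (Fin n) (Fin n) ℝ}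

lemma trace_transpose_mul_conj_rectDiag (hU : Uᵀ * U = 1) (hV : Vᵀ * V = 1)
    (a b : Fin (min m n) → ℝ) :
    ((U * rectDiag m n a * Vᵀ)ᵀ * (U * rectDiag m n b * Vᵀ)).trace = ∑ k, a k * b k := by
  rw [transpose_mul_of_orthogonal hU, trace_mul_cycle, hV, Matrix.one_mul,
    rectDiag_transpose_mul_rectDiag, trace_diagonal, sum_padDiag]
  rfl

lemma posSemidef_one_sub_conj_rectDiag (hU : Uᵀ * U = 1) (hV : Vᵀ * V = 1)
    {a : Fin (min m n) → ℝ} (ha : ∀ k, |a k| ≤ 1) :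
    (1 - (U * rectDiag m n a * Vᵀ)ᵀ * (U * rectDiag m n a * Vᵀ)).PosSemidef := by
  have hV' : V * Vᵀ = 1 := mul_eq_one_comm.mp hV
  have hdiag : (diagonal fun j => 1 - padDiag m n (a * a) j).PosSemidef := by
    refine PosSemidef.diagonal fun j => ?_
    simp only [padDiag, Pi.mul_apply, Pi.zero_apply]
    split_ifs with h
    · nlinarith [abs_le.mp (ha ⟨j, h⟩)]
    · norm_num
  have := hdiag.mul_mul_conjTranspose_same V
  rwa [conjTranspose_eq_transpose_of_trivial, ← diagonal_sub, diagonal_one, Matrix.mul_sub,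
    Matrix.sub_mul, Matrix.mul_one, hV', ← rectDiag_transpose_mul_rectDiag,
    ← transpose_mul_of_orthogonal hU] at this

lemma nuclearNorm_conj_rectDiag (hU : Uᵀ * U = 1) (hV : Vᵀ * V = 1)
    {a : Fin (min m n) → ℝ} (ha : ∀ k, 0 ≤ a k) :
    nuclearNorm (U * rectDiag m n a * Vᵀ) = ∑ k, a k := by
  have hpad : ∀ j, 0 ≤ padDiag m n a j := fun j => by
    unfold padDiag
    split_ifs <;> simp [ha]
  have hP : (V * diagonal (padDiag m n a) * Vᵀ).PosSemidef := by
    simpa [conjTranspose_eq_transpose_of_trivial] using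
      (PosSemidef.diagonal hpad).mul_mul_conjTranspose_same V
  rw [nuclearNorm_eq_trace_of_mul_self hP, trace_mul_cycle, hV, Matrix.one_mul, trace_diagonal,
    sum_padDiag]
  rw [transpose_mul_of_orthogonal hU, rectDiag_transpose_mul_rectDiag, padDiag_mul,
    show padDiag m n a * padDiag m n a = fun j => padDiag m n a j * padDiag m n a j from rfl,
    ← diagonal_mul_diagonal]
  simp only [Matrix.mul_assoc]
  rw [← Matrix.mul_assoc Vᵀ, hV, Matrix.one_mul]

end rectDiag

lemma abs_sub_max_sub_le {c s : ℝ} (hc : 0 ≤ c) (hs : 0 ≤ s) : |s - max (s - c) 0| ≤ c := by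
  rcases le_total s c with h | h
  · rw [max_eq_right (by linarith), sub_zero, abs_of_nonneg hs]
    exact h
  · rw [max_eq_left (by linarith), sub_sub_cancel, abs_of_nonneg hc]

lemma sub_max_sub_mul (c s : ℝ) : (s - max (s - c) 0) * max (s - c) 0 = c * max (s - c) 0 := by
  rcases le_total s c with h | h
  · rw [max_eq_right (by linarith)]
    ring
  · rw [max_eq_left (by linarith)]
    ring

theorem svt_minimizer_general (m n : ℕ) (τ : ℝ) (hτ : 0 < τ)
    (σ : Fin (min m n) → ℝ) (hσ : ∀ j, 0 ≤ σ j)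
    (U : Matrix (Fin m) (Fin m) ℝ) (V : Matrix (Fin n) (Fin n) ℝ)
    (hU : Uᵀ * U = 1)
    (hV : Vᵀ * V = 1)
    (Y : Matrix (Fin m) (Fin n) ℝ)
    (hY : Y = U * rectDiag m n σ * Vᵀ)
    (Yhat : Matrix (Fin m) (Fin n) ℝ)
    (hYhat : Yhat = U * rectDiag m n (fun j => max (σ j - 1 / (2 * τ)) 0) * Vᵀ) :
    ∀ X : Matrix (Fin m) (Fin n) ℝ,
      τ * (frobNorm (Yhat - Y)) ^ 2 + nuclearNorm Yhat ≤
        τ * (frobNorm (X - Y)) ^ 2 + nuclearNorm X := by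
  set d : Fin (min m n) → ℝ := fun j => max (σ j - 1 / (2 * τ)) 0
  set e : Fin (min m n) → ℝ := (2 * τ) • (σ - d)
  have h2τ : 2 * τ * (1 / (2 * τ)) = 1 := mul_one_div_cancel (by positivity)
  have he : ∀ k, |e k| ≤ 1 := fun k => by
    have := abs_sub_max_sub_le (by positivity : 0 ≤ 1 / (2 * τ)) (hσ k)
    simp only [e, Pi.smul_apply, Pi.sub_apply, smul_eq_mul, abs_mul,
      abs_of_pos (by positivity : 0 < 2 * τ)]
    nlinarith
  have hed : ∀ k, e k * d k = d k := fun k => by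
    simp only [e, d, Pi.smul_apply, Pi.sub_apply, smul_eq_mul]
    rw [mul_assoc, sub_max_sub_mul, ← mul_assoc, h2τ, one_mul]
  apply add_nuclearNorm_le_of_subgradient hτ.le (G := U * rectDiag m n e * Vᵀ)
  · rw [hY, hYhat, rectDiag_smul, rectDiag_sub, Matrix.mul_smul, Matrix.smul_mul, Matrix.mul_sub,
      Matrix.sub_mul]
  · exact posSemidef_one_sub_conj_rectDiag hU hV he
  · rw [hYhat, trace_transpose_mul_conj_rectDiag hU hV,
      nuclearNorm_conj_rectDiag hU hV fun k => le_max_right _ _]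
    exact Finset.sum_congr rfl fun k _ => hed k

/-- Singular value thresholding: `Ŷ = U D Vᵀ` (with singular values soft-thresholded
at level `1/(2τ)`) minimizes `X ↦ τ‖X − Y‖_F² + ‖X‖_*` where `Y = U S Vᵀ`. -/
theorem svt_minimizer (m n : ℕ) (τ : ℝ) (hτ : 0 < τ)
    (σ : Fin (min m n) → ℝ) (hσ : ∀ j, 0 ≤ σ j)
    (U : Matrix (Fin m) (Fin m) ℝ) (V : Matrix (Fin n) (Fin n) ℝ)
    (hU : Uᵀ * U = 1) (hU' : U * Uᵀ = 1)
    (hV : Vᵀ * V = 1) (hV' : V * Vᵀ = 1)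
    (Y : Matrix (Fin m) (Fin n) ℝ)
    (hY : Y = U * rectDiag m n σ * Vᵀ)
    (Yhat : Matrix (Fin m) (Fin n) ℝ)
    (hYhat : Yhat = U * rectDiag m n (fun j => max (σ j - 1 / (2 * τ)) 0) * Vᵀ) :
    ∀ X : Matrix (Fin m) (Fin n) ℝ,
      τ * (frobNorm (Yhat - Y)) ^ 2 + nuclearNorm Yhat ≤
        τ * (frobNorm (X - Y)) ^ 2 + nuclearNorm X :=
  svt_minimizer_general m n τ hτ σ hσ U V hU hV Y hY Yhat hYhat
end

section
/- Let E = EuclideanSpace ℝ (Fin d), let μ > 0, γ ≥ 0, B ≥ 0, and N ≥ 1. For each k ∈ Fin N let f_k : E → ℝ be differentiable with ⟪∇f_k(v) − ∇f_k(w), v − w⟫ ≥ μ‖v − w‖² for all v, w, admitting a point w_k* with ∇f_k(w_k*) = 0, and let w_k ∈ E satisfy ‖∇f_k(w_k)‖ ≤ γ‖∇f_k(w₀)‖ for a fixed w₀ ∈ E. Set f = (1/N)·Σ_k f_k and assume the B-dissimilarity bound (1/N)·Σ_k ‖∇f_k(w₀)‖² ≤ B²·‖∇f(w₀)‖². Then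 ‖(1/N)·Σ_k w_k − w₀‖ ≤ ((1 + γ)·B/μ) · ‖∇f(w₀)‖. (This is Eq. (25) in the proof of Theorem 4.3.) -/
/-!
Strong monotonicity of `∇f_k` gives `μ‖w_k - w₀‖ ≤ ‖∇f_k(w_k) - ∇f_k(w₀)‖ ≤ (1 + γ)‖∇f_k(w₀)‖`.
Averaging over `k`, the mean of `‖∇f_k(w₀)‖` is at most its root mean square, which
`B`-dissimilarity bounds by `B‖∇f(w₀)‖`.
-/

open scoped RealInnerProductSpace

open Finset

section

variable {E : Type*} [NormedAddCommGroup E] [InnerProductSpace ℝ E]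

theorem mul_norm_sub_le_norm_sub_of_strongMonotone {g : E → E} {μ : ℝ}
    (hg : ∀ v w, μ * ‖v - w‖ ^ 2 ≤ ⟪g v - g w, v - w⟫) (v w : E) :
    μ * ‖v - w‖ ≤ ‖g v - g w‖ := by
  rcases (norm_nonneg (v - w)).eq_or_lt with hvw | hvw
  · rw [← hvw, mul_zero]
    exact norm_nonneg _
  · refine le_of_mul_le_mul_right ?_ hvw
    calc μ * ‖v - w‖ * ‖v - w‖ = μ * ‖v - w‖ ^ 2 := by ring
      _ ≤ ⟪g v - g w, v - w⟫ := hg v w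
      _ ≤ ‖g v - g w‖ * ‖v - w‖ := real_inner_le_norm _ _

theorem norm_sub_le_of_norm_le_mul_norm {g : E → E} {μ γ : ℝ} (hμ : 0 < μ)
    (hg : ∀ v w, μ * ‖v - w‖ ^ 2 ≤ ⟪g v - g w, v - w⟫) {w w₀ : E}
    (hw : ‖g w‖ ≤ γ * ‖g w₀‖) :
    ‖w - w₀‖ ≤ (1 + γ) / μ * ‖g w₀‖ := by
  rw [div_mul_eq_mul_div, le_div_iff₀ hμ, mul_comm]
  calc μ * ‖w - w₀‖ ≤ ‖g w - g w₀‖ := mul_norm_sub_le_norm_sub_of_strongMonotone hg w w₀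
    _ ≤ ‖g w‖ + ‖g w₀‖ := norm_sub_le _ _
    _ ≤ (1 + γ) * ‖g w₀‖ := by linarith

theorem norm_inv_card_smul_sum_sub_le {ι : Type*} {s : Finset ι} (hs : s.Nonempty)
    (w : ι → E) (w₀ : E) :
    ‖(#s : ℝ)⁻¹ • ∑ i ∈ s, w i - w₀‖ ≤ (#s : ℝ)⁻¹ * ∑ i ∈ s, ‖w i - w₀‖ := by
  have hcard : (#s : ℝ) ≠ 0 := by exact_mod_cast hs.card_pos.ne'
  have hmean : (#s : ℝ)⁻¹ • ∑ i ∈ s, w i - w₀ = (#s : ℝ)⁻¹ • ∑ i ∈ s, (w i - w₀) := by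
    rw [sum_sub_distrib, smul_sub, sum_const, ← Nat.cast_smul_eq_nsmul ℝ, smul_smul,
      inv_mul_cancel₀ hcard, one_smul]
  rw [hmean, norm_smul, Real.norm_of_nonneg (by positivity)]
  gcongr
  exact norm_sum_le _ _

end

theorem inv_card_mul_sum_le_of_inv_card_mul_sum_sq_le {ι : Type*} {s : Finset ι} {a : ι → ℝ}
    {c : ℝ} (hc : 0 ≤ c) (h : (#s : ℝ)⁻¹ * ∑ i ∈ s, a i ^ 2 ≤ c ^ 2) :
    (#s : ℝ)⁻¹ * ∑ i ∈ s, a i ≤ c := by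
  refine le_of_sq_le_sq ?_ hc
  calc ((#s : ℝ)⁻¹ * ∑ i ∈ s, a i) ^ 2 = ((∑ i ∈ s, a i) / #s) ^ 2 := by ring
    _ ≤ (∑ i ∈ s, a i ^ 2) / #s := sum_div_card_sq_le_sum_sq_div_card
    _ ≤ c ^ 2 := by rwa [div_eq_inv_mul]

theorem avg_inexact_distance_general {d N : ℕ} (hN : 1 ≤ N)
    (μ γ B : ℝ) (hμ : 0 < μ) (hγ : 0 ≤ γ) (hB : 0 ≤ B)
    (fk : Fin N → EuclideanSpace ℝ (Fin d) → ℝ)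
    (hconv : ∀ k, ∀ v w : EuclideanSpace ℝ (Fin d),
      μ * ‖v - w‖ ^ 2 ≤ ⟪gradient (fk k) v - gradient (fk k) w, v - w⟫)
    (w₀ : EuclideanSpace ℝ (Fin d)) (w : Fin N → EuclideanSpace ℝ (Fin d))
    (hinexact : ∀ k, ‖gradient (fk k) (w k)‖ ≤ γ * ‖gradient (fk k) w₀‖)
    (f : EuclideanSpace ℝ (Fin d) → ℝ)
    (hdissim : (N : ℝ)⁻¹ * ∑ k, ‖gradient (fk k) w₀‖ ^ 2 ≤
      B ^ 2 * ‖gradient f w₀‖ ^ 2) :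
    ‖(N : ℝ)⁻¹ • ∑ k, w k - w₀‖ ≤ ((1 + γ) * B / μ) * ‖gradient f w₀‖ := by
  have hmean : (N : ℝ)⁻¹ * ∑ k, ‖gradient (fk k) w₀‖ ≤ B * ‖gradient f w₀‖ := by
    simpa using inv_card_mul_sum_le_of_inv_card_mul_sum_sq_le (s := univ)
      (a := fun k => ‖gradient (fk k) w₀‖) (by positivity) (by simpa [mul_pow] using hdissim)
  have hne : (univ : Finset (Fin N)).Nonempty := univ_nonempty_iff.mpr ⟨⟨0, hN⟩⟩
  calc ‖(N : ℝ)⁻¹ • ∑ k, w k - w₀‖ ≤ (N : ℝ)⁻¹ * ∑ k, ‖w k - w₀‖ := by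
        simpa using norm_inv_card_smul_sum_sub_le hne w w₀
    _ ≤ (N : ℝ)⁻¹ * ∑ k, (1 + γ) / μ * ‖gradient (fk k) w₀‖ := by
        gcongr with k
        exact norm_sub_le_of_norm_le_mul_norm hμ (hconv k) (hinexact k)
    _ = (1 + γ) / μ * ((N : ℝ)⁻¹ * ∑ k, ‖gradient (fk k) w₀‖) := by
        rw [← mul_sum]; ring
    _ ≤ (1 + γ) / μ * (B * ‖gradient f w₀‖) := by gcongr
    _ = ((1 + γ) * B / μ) * ‖gradient f w₀‖ := by ring

/-- Distance bound for the average of inexact local minimizers,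
Eq. (25) in the proof of Theorem 4.3. -/
theorem avg_inexact_distance {d N : ℕ} (hN : 1 ≤ N)
    (μ γ B : ℝ) (hμ : 0 < μ) (hγ : 0 ≤ γ) (hB : 0 ≤ B)
    (fk : Fin N → EuclideanSpace ℝ (Fin d) → ℝ)
    (hdiff : ∀ k, Differentiable ℝ (fk k))
    (hconv : ∀ k, ∀ v w : EuclideanSpace ℝ (Fin d),
      μ * ‖v - w‖ ^ 2 ≤ ⟪gradient (fk k) v - gradient (fk k) w, v - w⟫)
    (hcrit : ∀ k, ∃ wstar : EuclideanSpace ℝ (Fin d), gradient (fk k) wstar = 0)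
    (w₀ : EuclideanSpace ℝ (Fin d)) (w : Fin N → EuclideanSpace ℝ (Fin d))
    (hinexact : ∀ k, ‖gradient (fk k) (w k)‖ ≤ γ * ‖gradient (fk k) w₀‖)
    (f : EuclideanSpace ℝ (Fin d) → ℝ)
    (hf : f = fun x => (N : ℝ)⁻¹ * ∑ k, fk k x)
    (hdissim : (N : ℝ)⁻¹ * ∑ k, ‖gradient (fk k) w₀‖ ^ 2 ≤
      B ^ 2 * ‖gradient f w₀‖ ^ 2) :
    ‖(N : ℝ)⁻¹ • ∑ k, w k - w₀‖ ≤ ((1 + γ) * B / μ) * ‖gradient f w₀‖ :=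
  avg_inexact_distance_general hN μ γ B hμ hγ hB fk hconv w₀ w hinexact f hdissim
end

section
/- Let E = EuclideanSpace ℝ (Fin d) and for each k ∈ Fin N let f_k : E → ℝ be differentiable. Set f = (1/N)·Σ_k f_k and assume ∇f is L₂-Lipschitz: ‖∇f(v) − ∇f(w)‖ ≤ L₂‖v − w‖ for all v, w. Fix w₀ ∈ E and η > 0, let w_k = w₀ − η·∇f_k(w₀), let w̄ = (1/N)·Σ_k w_k, and assume ‖w̄ − w₀‖ ≤ ((1 + γ)·B/μ)·‖∇f(w₀)‖ for constants γ ≥ 0, B ≥ 0, μ > 0. Then f(w̄) ≤ f(w₀) − (η − L₂·B²·(1 + γ)²/(2μ²))·‖∇f(w₀)‖². (This is the one-step descent bound, Eq. (27), in the proof of Theorem 4.3.) -/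
/-!
The averaged iterate is exactly one gradient step on `f`, since the gradient of an average is the
average of the gradients: `w̄ - w₀ = -η ∇f(w₀)`. The descent lemma for an `L₂`-smooth function,
`f y ≤ f x + ⟪∇f x, y - x⟫ + L₂/2 ‖y - x‖²`, evaluated along this step gives the first-order
decrease `-η ‖∇f(w₀)‖²`, and the assumed bound on `‖w̄ - w₀‖` controls the quadratic term.
-/

open InnerProductSpace

section Gradient

variable {F : Type*} [NormedAddCommGroup F] [InnerProductSpace ℝ F] [CompleteSpace F]

theorem HasGradientAt.fun_sum {ι : Type*} {s : Finset ι} {f : ι → F → ℝ} {f' : ι → F} {x : F}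
    (h : ∀ i ∈ s, HasGradientAt (f i) (f' i) x) :
    HasGradientAt (fun y => ∑ i ∈ s, f i y) (∑ i ∈ s, f' i) x := by
  rw [hasGradientAt_iff_hasFDerivAt, map_sum]
  exact HasFDerivAt.fun_sum fun i hi => (h i hi).hasFDerivAt

theorem HasGradientAt.const_mul {f : F → ℝ} {f' x : F} (h : HasGradientAt f f' x) (c : ℝ) :
    HasGradientAt (fun y => c * f y) (c • f') x := by
  rw [hasGradientAt_iff_hasFDerivAt, map_smul]
  exact h.hasFDerivAt.const_mul c

theorem HasGradientAt.hasDerivAt_add_smul {f : F → ℝ} {f' x v : F} {t : ℝ}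
    (h : HasGradientAt f f' (x + t • v)) :
    HasDerivAt (fun s : ℝ => f (x + s • v)) ⟪f', v⟫_ℝ t := by
  have hline : HasDerivAt (fun s : ℝ => x + s • v) v t := by
    simpa using ((hasDerivAt_id t).smul_const v).const_add x
  exact h.hasFDerivAt.comp_hasDerivAt t hline

theorem le_add_inner_gradient_add_half_mul_norm_sq {f : F → ℝ} (hf : Differentiable ℝ f) {L : ℝ}
    (hLip : ∀ v w, ‖gradient f v - gradient f w‖ ≤ L * ‖v - w‖) (x y : F) :
    f y ≤ f x + ⟪gradient f x, y - x⟫_ℝ + L / 2 * ‖y - x‖ ^ 2 := by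
  set v := y - x
  set c := ⟪gradient f x, v⟫_ℝ
  -- `φ` is antitone on `[0, 1]`; comparing `φ 0` with `φ 1` is the claim.
  set φ : ℝ → ℝ := fun t => f (x + t • v) - t * c - L / 2 * ‖v‖ ^ 2 * t ^ 2
  have hφ : ∀ t, HasDerivAt φ (⟪gradient f (x + t • v), v⟫_ℝ - c - L * ‖v‖ ^ 2 * t) t := by
    intro t
    have hquad := ((hasDerivAt_pow 2 t).const_mul (L / 2 * ‖v‖ ^ 2)).congr_deriv
      (show L / 2 * ‖v‖ ^ 2 * (↑2 * t ^ (2 - 1)) = L * ‖v‖ ^ 2 * t by ring)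
    exact (((hf _).hasGradientAt.hasDerivAt_add_smul).sub
      ((hasDerivAt_id t).mul_const c |>.congr_deriv (one_mul c))).sub hquad
  have hφ' : ∀ t ∈ interior (Set.Icc (0 : ℝ) 1), deriv φ t ≤ 0 := by
    intro t ht
    rw [interior_Icc] at ht
    have hinner : ⟪gradient f (x + t • v) - gradient f x, v⟫_ℝ ≤ L * ‖v‖ ^ 2 * t :=
      calc ⟪gradient f (x + t • v) - gradient f x, v⟫_ℝ
          ≤ ‖gradient f (x + t • v) - gradient f x‖ * ‖v‖ := real_inner_le_norm _ _
        _ ≤ L * ‖x + t • v - x‖ * ‖v‖ := mul_le_mul_of_nonneg_right (hLip _ _) (norm_nonneg v)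
        _ = L * ‖v‖ ^ 2 * t := by
          rw [add_sub_cancel_left, norm_smul, Real.norm_of_nonneg ht.1.le]; ring
    rw [(hφ t).deriv]
    rw [inner_sub_left] at hinner
    linarith
  have hanti : AntitoneOn φ (Set.Icc 0 1) :=
    antitoneOn_of_deriv_nonpos (convex_Icc 0 1)
      (fun t _ => (hφ t).continuousAt.continuousWithinAt)
      (fun t _ => (hφ t).differentiableAt.differentiableWithinAt) hφ'
  have h01 := hanti (Set.left_mem_Icc.2 zero_le_one) (Set.right_mem_Icc.2 zero_le_one) zero_le_one
  simp only [φ, one_smul, zero_smul, add_zero, add_sub_cancel, v] at h01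
  linarith

theorem image_le_of_gradient_step {f : F → ℝ} (hf : Differentiable ℝ f) {L : ℝ}
    (hLip : ∀ v w, ‖gradient f v - gradient f w‖ ≤ L * ‖v - w‖) {x y : F} {η c : ℝ}
    (hstep : y - x = -(η • gradient f x)) (hbound : ‖y - x‖ ≤ c * ‖gradient f x‖) :
    f y ≤ f x - (η - L * c ^ 2 / 2) * ‖gradient f x‖ ^ 2 := by
  set g := gradient f x
  by_cases hg : g = 0
  · rw [hg, smul_zero, neg_zero, sub_eq_zero] at hstep
    simp [hstep, hg]
  have hL : 0 ≤ L := by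
    have := (norm_nonneg _).trans (hLip g 0)
    rw [sub_zero] at this
    exact nonneg_of_mul_nonneg_left this (norm_pos_iff.2 hg)
  calc f y ≤ f x + ⟪g, y - x⟫_ℝ + L / 2 * ‖y - x‖ ^ 2 :=
        le_add_inner_gradient_add_half_mul_norm_sq hf hLip x y
    _ ≤ f x + ⟪g, -(η • g)⟫_ℝ + L / 2 * (c * ‖g‖) ^ 2 := by
        rw [hstep]; gcongr; rwa [← hstep]
    _ = f x - (η - L * c ^ 2 / 2) * ‖g‖ ^ 2 := by
        rw [inner_neg_right, real_inner_smul_right, real_inner_self_eq_norm_sq]; ring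

end Gradient

theorem inv_natCast_smul_sum_sub_smul {V : Type*} [AddCommGroup V] [Module ℝ V] {N : ℕ}
    (hN : N ≠ 0) (x : V) (η : ℝ) (g : Fin N → V) :
    (N : ℝ)⁻¹ • ∑ k, (x - η • g k) = x - η • ((N : ℝ)⁻¹ • ∑ k, g k) := by
  rw [Finset.sum_sub_distrib, ← Finset.smul_sum, Finset.sum_const, Finset.card_univ,
    Fintype.card_fin, ← Nat.cast_smul_eq_nsmul ℝ, smul_sub, smul_smul,
    inv_mul_cancel₀ (Nat.cast_ne_zero.2 hN), one_smul, smul_comm]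

theorem one_step_descent_general {d N : ℕ} (hN : 1 ≤ N)
    (μ γ B L₂ η : ℝ)
    (fk : Fin N → EuclideanSpace ℝ (Fin d) → ℝ)
    (hdiff : ∀ k, Differentiable ℝ (fk k))
    (f : EuclideanSpace ℝ (Fin d) → ℝ)
    (hf : f = fun x => (N : ℝ)⁻¹ * ∑ k, fk k x)
    (hLip : ∀ v w : EuclideanSpace ℝ (Fin d),
      ‖gradient f v - gradient f w‖ ≤ L₂ * ‖v - w‖)
    (w₀ : EuclideanSpace ℝ (Fin d)) (wk : Fin N → EuclideanSpace ℝ (Fin d))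
    (hwk : ∀ k, wk k = w₀ - η • gradient (fk k) w₀)
    (wbar : EuclideanSpace ℝ (Fin d))
    (hwbar : wbar = (N : ℝ)⁻¹ • ∑ k, wk k)
    (hdist : ‖wbar - w₀‖ ≤ ((1 + γ) * B / μ) * ‖gradient f w₀‖) :
    f wbar ≤ f w₀ - (η - L₂ * B ^ 2 * (1 + γ) ^ 2 / (2 * μ ^ 2)) * ‖gradient f w₀‖ ^ 2 := by
  have hgrad : HasGradientAt f ((N : ℝ)⁻¹ • ∑ k, gradient (fk k) w₀) w₀ := by
    rw [hf]
    exact (HasGradientAt.fun_sum fun k _ => (hdiff k w₀).hasGradientAt).const_mul _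
  have hfd : Differentiable ℝ f := by
    rw [hf]; exact (Differentiable.fun_sum fun k _ => hdiff k).const_mul _
  have hstep : wbar - w₀ = -(η • gradient f w₀) := by
    rw [hwbar, funext hwk, inv_natCast_smul_sum_sub_smul (by omega), hgrad.gradient]
    abel
  convert image_le_of_gradient_step hfd hLip hstep hdist using 3
  ring

/-- One-step descent bound, Eq. (27) in the proof of Theorem 4.3: after each client
performs one gradient step from `w₀`, the average iterate `w̄` satisfies
`f(w̄) ≤ f(w₀) − (η − L₂B²(1+γ)²/(2μ²))‖∇f(w₀)‖²`. -/
theorem one_step_descent {d N : ℕ} (hN : 1 ≤ N)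
    (μ γ B L₂ η : ℝ) (hμ : 0 < μ) (hγ : 0 ≤ γ) (hB : 0 ≤ B) (hη : 0 < η)
    (fk : Fin N → EuclideanSpace ℝ (Fin d) → ℝ)
    (hdiff : ∀ k, Differentiable ℝ (fk k))
    (f : EuclideanSpace ℝ (Fin d) → ℝ)
    (hf : f = fun x => (N : ℝ)⁻¹ * ∑ k, fk k x)
    (hLip : ∀ v w : EuclideanSpace ℝ (Fin d),
      ‖gradient f v - gradient f w‖ ≤ L₂ * ‖v - w‖)
    (w₀ : EuclideanSpace ℝ (Fin d)) (wk : Fin N → EuclideanSpace ℝ (Fin d))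
    (hwk : ∀ k, wk k = w₀ - η • gradient (fk k) w₀)
    (wbar : EuclideanSpace ℝ (Fin d))
    (hwbar : wbar = (N : ℝ)⁻¹ • ∑ k, wk k)
    (hdist : ‖wbar - w₀‖ ≤ ((1 + γ) * B / μ) * ‖gradient f w₀‖) :
    f wbar ≤ f w₀ - (η - L₂ * B ^ 2 * (1 + γ) ^ 2 / (2 * μ ^ 2)) * ‖gradient f w₀‖ ^ 2 :=
  one_step_descent_general hN μ γ B L₂ η fk hdiff f hf hLip w₀ wk hwk wbar hwbar hdist
end

section
/- Let E be a real inner product space, let N ≥ 1 and K ≥ 1 be natural numbers, let μ > 0, γ ≥ 0, B ≥ 0, G ≥ 0 be reals, let w : Fin N → E, w₀ ∈ E, and g : Fin N → ℝ with g_k ≥ 0. Assume ‖w_k − w₀‖ ≤ ((1 + γ)/μ)·g_k for every k and (1/N)·Σ_k g_k² ≤ B²·G². Let w̄ = (1/N)·Σ_k w_k. Then (1/N^K) · Σ_{s : Fin K → Fin N} ‖(1/K)·Σ_{j : Fin K} w_{s(j)} − w̄‖² ≤ (2/K)·((1 + γ)²·B²/μ²)·G². (This is the bounded-variance estimate, Eq.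 (34), in the proof of Theorem 4.3, with g_k playing the role of ‖∇f_k(w₀)‖ and G that of ‖∇f(w₀)‖.) -/
/-!
Centre the clients' models at their mean `w̄`. The sampled mean minus `w̄` is `1/K` times a sum of
`K` independent uniform draws of centred vectors, so its second moment is `1/K` times their
variance: in `‖∑ⱼ uₛⱼ‖²` the cross terms of distinct draws average to `⟪∑ u, ∑ u⟫ = 0`. The
variance is at most the mean squared distance to `w₀`, which the distance bound and
`B`-dissimilarity bound by `((1+γ)/μ)² B² G²`.
-/

open Finset RealInnerProductSpace

section
variable {E : Type*} [NormedAddCommGroup E] [InnerProductSpace ℝ E] {α : Type*} [Fintype α]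

theorem sum_sub_mean_eq_zero (v : α → E) :
    ∑ a, (v a - (Fintype.card α : ℝ)⁻¹ • ∑ b, v b) = 0 := by
  rcases isEmpty_or_nonempty α with _ | _
  · simp
  rw [sum_sub_distrib, sum_const, card_univ, ← Nat.cast_smul_eq_nsmul ℝ, smul_inv_smul₀
    (by positivity), sub_self]

theorem sum_norm_sub_mean_sq_le (v : α → E) (c : E) :
    ∑ a, ‖v a - (Fintype.card α : ℝ)⁻¹ • ∑ b, v b‖ ^ 2 ≤ ∑ a, ‖v a - c‖ ^ 2 := by
  set m := (Fintype.card α : ℝ)⁻¹ • ∑ b, v b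
  have hsplit : ∀ a, ‖v a - c‖ ^ 2 = ‖v a - m‖ ^ 2 + 2 * ⟪v a - m, m - c⟫ + ‖m - c‖ ^ 2 := by
    intro a
    rw [← norm_add_sq_real, sub_add_sub_cancel]
  have hcross : ∑ a, ⟪v a - m, m - c⟫ = 0 := by
    rw [← sum_inner, sum_sub_mean_eq_zero, inner_zero_left]
  simp only [hsplit, sum_add_distrib, ← mul_sum, hcross]
  have : 0 ≤ ∑ _a : α, ‖m - c‖ ^ 2 := by positivity
  linarith

theorem mean_norm_sum_comp_sq_of_sum_eq_zero [Nonempty α] {u : α → E} (hu : ∑ a, u a = 0)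
    (K : ℕ) :
    ((Fintype.card α : ℝ) ^ K)⁻¹ * ∑ s : Fin K → α, ‖∑ j, u (s j)‖ ^ 2 =
      K * ((Fintype.card α : ℝ)⁻¹ * ∑ a, ‖u a‖ ^ 2) := by
  induction K with
  | zero => simp
  | succ K ih =>
    rw [← (Fin.consEquiv fun _ => α).sum_comp, Fintype.sum_prod_type]
    simp only [Fin.consEquiv_apply, Fin.sum_univ_succ, Fin.cons_zero, Fin.cons_succ,
      norm_add_sq_real, sum_add_distrib, ← mul_sum, ← inner_sum, ← sum_inner, hu, inner_zero_left]
    have hN : (Fintype.card α : ℝ) ≠ 0 := by positivity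
    rw [inv_mul_eq_iff_eq_mul₀ (pow_ne_zero _ hN)] at ih
    simp only [sum_const, card_univ, Fintype.card_fun, Fintype.card_fin, nsmul_eq_mul, ih]
    rw [← mul_sum]
    push_cast
    field_simp
    ring
end

theorem sampled_mean_variance_bound_general {E : Type*} [NormedAddCommGroup E]
    [InnerProductSpace ℝ E] {N K : ℕ} (hN : 1 ≤ N) (hK : 1 ≤ K)
    (μ γ B G : ℝ)
    (w : Fin N → E) (w₀ : E) (g : Fin N → ℝ)
    (hdist : ∀ k, ‖w k - w₀‖ ≤ ((1 + γ) / μ) * g k)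
    (hdissim : (N : ℝ)⁻¹ * ∑ k, (g k) ^ 2 ≤ B ^ 2 * G ^ 2)
    (wbar : E) (hwbar : wbar = (N : ℝ)⁻¹ • ∑ k, w k) :
    ((N : ℝ) ^ K)⁻¹ * ∑ s : Fin K → Fin N, ‖(K : ℝ)⁻¹ • ∑ j, w (s j) - wbar‖ ^ 2 ≤
      (2 / (K : ℝ)) * ((1 + γ) ^ 2 * B ^ 2 / μ ^ 2) * G ^ 2 := by
  have : Nonempty (Fin N) := ⟨⟨0, hN⟩⟩
  have hK0 : (K : ℝ) ≠ 0 := Nat.cast_ne_zero.mpr (by omega)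
  have hcenter : ∀ s : Fin K → Fin N,
      (K : ℝ)⁻¹ • ∑ j, w (s j) - wbar = (K : ℝ)⁻¹ • ∑ j, (w (s j) - wbar) := by
    intro s
    rw [sum_sub_distrib, sum_const, card_univ, Fintype.card_fin, ← Nat.cast_smul_eq_nsmul ℝ,
      smul_sub, inv_smul_smul₀ hK0]
  have hmean : ∑ k, (w k - wbar) = 0 := by
    simpa only [hwbar, Fintype.card_fin] using sum_sub_mean_eq_zero w
  calc ((N : ℝ) ^ K)⁻¹ * ∑ s : Fin K → Fin N, ‖(K : ℝ)⁻¹ • ∑ j, w (s j) - wbar‖ ^ 2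
      = (K : ℝ)⁻¹ ^ 2 * (((N : ℝ) ^ K)⁻¹ * ∑ s : Fin K → Fin N, ‖∑ j, (w (s j) - wbar)‖ ^ 2) := by
        simp only [hcenter, norm_smul, mul_pow, ← mul_sum, norm_inv, RCLike.norm_natCast]
        ring
    _ = (K : ℝ)⁻¹ * ((N : ℝ)⁻¹ * ∑ k, ‖w k - wbar‖ ^ 2) := by
        have hvar := mean_norm_sum_comp_sq_of_sum_eq_zero hmean K
        rw [Fintype.card_fin] at hvar
        rw [hvar]
        field_simp
    _ ≤ (K : ℝ)⁻¹ * ((N : ℝ)⁻¹ * ∑ k, ‖w k - w₀‖ ^ 2) := by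
        gcongr (K : ℝ)⁻¹ * (_ * ?_)
        simpa only [hwbar, Fintype.card_fin] using sum_norm_sub_mean_sq_le w w₀
    _ ≤ (K : ℝ)⁻¹ * ((N : ℝ)⁻¹ * ∑ k, (((1 + γ) / μ) * g k) ^ 2) := by
        gcongr with k
        exact hdist k
    _ = (K : ℝ)⁻¹ * (((1 + γ) / μ) ^ 2 * ((N : ℝ)⁻¹ * ∑ k, g k ^ 2)) := by
        simp only [mul_pow, ← mul_sum]
        ring
    _ ≤ (K : ℝ)⁻¹ * (((1 + γ) / μ) ^ 2 * (B ^ 2 * G ^ 2)) := by gcongr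
    _ = (K : ℝ)⁻¹ * ((1 + γ) ^ 2 * B ^ 2 / μ ^ 2 * G ^ 2) := by ring
    _ ≤ (2 / (K : ℝ)) * ((1 + γ) ^ 2 * B ^ 2 / μ ^ 2) * G ^ 2 := by
        rw [mul_assoc (2 / (K : ℝ)), inv_eq_one_div]
        gcongr
        norm_num

/-- Bounded-variance estimate, Eq. (34) in the proof of Theorem 4.3: the second moment
of the deviation of the sampled mean from the full mean is at most
`(2/K)((1+γ)²B²/μ²)G²`, where the average is over all `N^K` sampling outcomes. -/
theorem sampled_mean_variance_bound {E : Type*} [NormedAddCommGroup E]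
    [InnerProductSpace ℝ E] {N K : ℕ} (hN : 1 ≤ N) (hK : 1 ≤ K)
    (μ γ B G : ℝ) (hμ : 0 < μ) (hγ : 0 ≤ γ) (hB : 0 ≤ B) (hG : 0 ≤ G)
    (w : Fin N → E) (w₀ : E) (g : Fin N → ℝ) (hg : ∀ k, 0 ≤ g k)
    (hdist : ∀ k, ‖w k - w₀‖ ≤ ((1 + γ) / μ) * g k)
    (hdissim : (N : ℝ)⁻¹ * ∑ k, (g k) ^ 2 ≤ B ^ 2 * G ^ 2)
    (wbar : E) (hwbar : wbar = (N : ℝ)⁻¹ • ∑ k, w k) :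
    ((N : ℝ) ^ K)⁻¹ * ∑ s : Fin K → Fin N, ‖(K : ℝ)⁻¹ • ∑ j, w (s j) - wbar‖ ^ 2 ≤
      (2 / (K : ℝ)) * ((1 + γ) ^ 2 * B ^ 2 / μ ^ 2) * G ^ 2 :=
  sampled_mean_variance_bound_general hN hK μ γ B G w w₀ g hdist hdissim wbar hwbar
end

section
/- Let E = EuclideanSpace ℝ (Fin d) and let f : E → ℝ be differentiable with ⟪∇f(v) − ∇f(w), v − w⟫ ≥ μ‖v − w‖² for all v, w, where μ > 0. Suppose w* ∈ E satisfies ∇f(w*) = 0. Let m > 0 and e ≥ 0 be reals with 2μm ≤ 1, and let (w_t)_{t ∈ ℕ} be a sequence in E satisfying f(w_{t+1}) ≤ f(w_t) − m·‖∇f(w_t)‖² + e for every t. Then for every T ∈ ℕ: f(w_T) − f(w*) ≤ (1 − 2μm)^T · (f(w_0) − f(w*)) + e·(1 − (1 − 2μm)^T)/(2μm); in particular f(w_T) − f(w*) ≤ (1 − 2μm)^T·(f(w_0) − f(w*)) + e/(2μm). (This is the deterministic convergence core of the utility guarantee Theorem 4.3, combining Eqs. (45)–(54): FedCEO's iterates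 converge linearly to within e/(2μm) of the optimum.) -/
/-!
Strong monotonicity of `∇f` gives the quadratic lower bound
`f y ≥ f x + ⟪∇f x, y - x⟫ + μ/2 ‖y - x‖²`; minimizing its right-hand side over `y` yields the
Polyak–Łojasiewicz inequality `2μ (f x - f w*) ≤ ‖∇f x‖²`. In the descent inequality this makes the
optimality gap contract, `g (t+1) ≤ (1 - 2μm) g t + e`, and unrolling this linear recursion gives
the bound.
-/

open scoped RealInnerProductSpace

section GradientStronglyMonotone

variable {E : Type*} [NormedAddCommGroup E] [InnerProductSpace ℝ E] [CompleteSpace E]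
  {f : E → ℝ}

theorem hasDerivAt_comp_add_smul {x v : E} {t : ℝ} (hf : DifferentiableAt ℝ f (x + t • v)) :
    HasDerivAt (fun s : ℝ => f (x + s • v)) ⟪gradient f (x + t • v), v⟫ t := by
  have hline : HasDerivAt (fun s : ℝ => x + s • v) v t := by
    simpa using ((hasDerivAt_id t).smul_const v).const_add x
  have h := hf.hasFDerivAt.comp_hasDerivAt t hline
  rwa [← toDual_gradient, InnerProductSpace.toDual_apply_apply] at h

theorem add_inner_gradient_add_le_of_gradient_strongMono {μ : ℝ} (hf : Differentiable ℝ f)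
    (hmono : ∀ v w : E, μ * ‖v - w‖ ^ 2 ≤ ⟪gradient f v - gradient f w, v - w⟫) (x y : E) :
    f x + ⟪gradient f x, y - x⟫ + μ / 2 * ‖y - x‖ ^ 2 ≤ f y := by
  set v := y - x
  set φ : ℝ → ℝ := fun t => f (x + t • v) - t * ⟪gradient f x, v⟫ - μ / 2 * t ^ 2 * ‖v‖ ^ 2
  have hφ : ∀ t : ℝ, HasDerivAt φ
      (⟪gradient f (x + t • v), v⟫ - ⟪gradient f x, v⟫ - μ * t * ‖v‖ ^ 2) t := by
    intro t
    have hquad := ((hasDerivAt_pow 2 t).const_mul (μ / 2)).mul_const (‖v‖ ^ 2)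
    refine (((hasDerivAt_comp_add_smul (hf _)).sub
      ((hasDerivAt_id t).mul_const ⟪gradient f x, v⟫)).sub hquad).congr_deriv ?_
    simp only [Nat.cast_ofNat]
    ring
  have hφ_nonneg : ∀ t ∈ interior (Set.Icc (0 : ℝ) 1),
      0 ≤ ⟪gradient f (x + t • v), v⟫ - ⟪gradient f x, v⟫ - μ * t * ‖v‖ ^ 2 := by
    intro t ht
    rw [interior_Icc] at ht
    -- strong monotonicity between `x + t • v` and `x`, divided by `t > 0`
    have key := hmono (x + t • v) x
    rw [add_sub_cancel_left, inner_smul_right, norm_smul, Real.norm_of_nonneg ht.1.le, mul_pow,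
      inner_sub_left] at key
    nlinarith [ht.1]
  have hφ_mono : MonotoneOn φ (Set.Icc 0 1) :=
    monotoneOn_of_hasDerivWithinAt_nonneg (convex_Icc 0 1)
      (fun t _ => (hφ t).continuousAt.continuousWithinAt)
      (fun t _ => (hφ t).hasDerivWithinAt) hφ_nonneg
  have h01 := hφ_mono (by norm_num) (by norm_num) zero_le_one
  simp only [φ, v, zero_smul, add_zero, one_smul, add_sub_cancel] at h01
  linarith

/-- Polyak–Łojasiewicz inequality. -/
theorem sub_le_norm_gradient_sq_of_gradient_strongMono {μ : ℝ} (hμ : 0 < μ)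
    (hf : Differentiable ℝ f)
    (hmono : ∀ v w : E, μ * ‖v - w‖ ^ 2 ≤ ⟪gradient f v - gradient f w, v - w⟫) (x y : E) :
    2 * μ * (f x - f y) ≤ ‖gradient f x‖ ^ 2 := by
  have hlb := add_inner_gradient_add_le_of_gradient_strongMono hf hmono x y
  have hcs : -⟪gradient f x, y - x⟫ ≤ ‖gradient f x‖ * ‖y - x‖ :=
    (neg_le_abs _).trans (abs_real_inner_le_norm _ _)
  nlinarith [sq_nonneg (‖gradient f x‖ - μ * ‖y - x‖)]

end GradientStronglyMonotone

theorem le_pow_mul_add_of_le_mul_add {a : ℕ → ℝ} {q e : ℝ} (hq : 0 ≤ q) (hq1 : q ≠ 1)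
    (h : ∀ t, a (t + 1) ≤ q * a t + e) (T : ℕ) :
    a T ≤ q ^ T * a 0 + e * (1 - q ^ T) / (1 - q) := by
  have hq1' : 1 - q ≠ 0 := sub_ne_zero.2 hq1.symm
  induction T with
  | zero => simp
  | succ T ih =>
    calc a (T + 1) ≤ q * a T + e := h T
      _ ≤ q * (q ^ T * a 0 + e * (1 - q ^ T) / (1 - q)) + e := by gcongr
      _ = q ^ (T + 1) * a 0 + e * (1 - q ^ (T + 1)) / (1 - q) := by field_simp; ring

theorem fedceo_linear_convergence_general {d : ℕ} (μ m e : ℝ) (hμ : 0 < μ)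
    (hm : 0 < m) (he : 0 ≤ e) (hcontr : 2 * μ * m ≤ 1)
    (f : EuclideanSpace ℝ (Fin d) → ℝ) (hf : Differentiable ℝ f)
    (hconv : ∀ v w : EuclideanSpace ℝ (Fin d),
      μ * ‖v - w‖ ^ 2 ≤ ⟪gradient f v - gradient f w, v - w⟫)
    (wstar : EuclideanSpace ℝ (Fin d))
    (w : ℕ → EuclideanSpace ℝ (Fin d))
    (hdesc : ∀ t, f (w (t + 1)) ≤ f (w t) - m * ‖gradient f (w t)‖ ^ 2 + e) :
    ∀ T : ℕ,
      f (w T) - f wstar ≤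
        (1 - 2 * μ * m) ^ T * (f (w 0) - f wstar) +
          e * (1 - (1 - 2 * μ * m) ^ T) / (2 * μ * m) ∧
      f (w T) - f wstar ≤
        (1 - 2 * μ * m) ^ T * (f (w 0) - f wstar) + e / (2 * μ * m) := by
  intro T
  have hrate : 0 < 2 * μ * m := by positivity
  have hstep : ∀ t, f (w (t + 1)) - f wstar ≤ (1 - 2 * μ * m) * (f (w t) - f wstar) + e := by
    intro t
    have hpl := mul_le_mul_of_nonneg_left
      (sub_le_norm_gradient_sq_of_gradient_strongMono hμ hf hconv (w t) wstar) hm.le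
    linarith [hdesc t]
  have hbound := le_pow_mul_add_of_le_mul_add (a := fun t => f (w t) - f wstar)
    (sub_nonneg.2 hcontr) (by linarith) hstep T
  rw [sub_sub_cancel] at hbound
  refine ⟨hbound, hbound.trans ?_⟩
  have hpow : 0 ≤ (1 - 2 * μ * m) ^ T := pow_nonneg (sub_nonneg.2 hcontr) T
  gcongr
  exact mul_le_of_le_one_right he (sub_le_self _ hpow)

/-- Deterministic convergence core of the utility guarantee, Theorem 4.3
(Eqs. (45)–(54)): a sequence satisfying the per-round descent inequality with
additive error `e` converges linearly to within `e/(2μm)` of the optimum of a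
μ-strongly convex objective. -/
theorem fedceo_linear_convergence {d : ℕ} (μ m e : ℝ) (hμ : 0 < μ)
    (hm : 0 < m) (he : 0 ≤ e) (hcontr : 2 * μ * m ≤ 1)
    (f : EuclideanSpace ℝ (Fin d) → ℝ) (hf : Differentiable ℝ f)
    (hconv : ∀ v w : EuclideanSpace ℝ (Fin d),
      μ * ‖v - w‖ ^ 2 ≤ ⟪gradient f v - gradient f w, v - w⟫)
    (wstar : EuclideanSpace ℝ (Fin d)) (hwstar : gradient f wstar = 0)
    (w : ℕ → EuclideanSpace ℝ (Fin d))
    (hdesc : ∀ t, f (w (t + 1)) ≤ f (w t) - m * ‖gradient f (w t)‖ ^ 2 + e) :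
    ∀ T : ℕ,
      f (w T) - f wstar ≤
        (1 - 2 * μ * m) ^ T * (f (w 0) - f wstar) +
          e * (1 - (1 - 2 * μ * m) ^ T) / (2 * μ * m) ∧
      f (w T) - f wstar ≤
        (1 - 2 * μ * m) ^ T * (f (w 0) - f wstar) + e / (2 * μ * m) :=
  fedceo_linear_convergence_general μ m e hμ hm he hcontr f hf hconv wstar w hdesc
end
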